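/- arXiv:2412.16867 — 2 statements merged into one kernel-verified Lean document; each statement's English description precedes it below -/
import Mathlib

section
/- (Key Lipschitz estimate for Theorem 3.) Let D ≥ 1, p ∈ [0, 1], N a natural number, ρ a D×D complex density matrix, O a D×D complex matrix, and U, V D×D unitary matrices. Let 𝓔_p(X) = (1 − p)X + p(Tr(X)/D)·I be the depolarizing channel and 𝓔_p^{∘N} its N-fold composition. Then |Tr(O·𝓔_p^{∘N}(UρUᴴ)) − Tr(O·𝓔_p^{∘N}(VρVᴴ))| ≤ (1 − p)^N·‖UᴴOU − VᴴOV‖, where ‖·‖ is the ℓ²→ℓ² operator norm. That is, under depolarizing noise the distance between noisy circuit outputs is contracted by the factor (1 − p)^N relative to the operator-norm distance between the conjugated observables. -/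
/-!
The depolarizing channel is linear and multiplies traceless matrices by `1 - p`. The inputs
`U ρ Uᴴ` and `V ρ Vᴴ` have the same trace, so `N` noisy layers scale their difference by
`(1 - p)^N`, and cyclicity of the trace moves the conjugations onto `O`. What remains is
`|Tr(A ρ)| ≤ ‖A‖` for a density matrix `ρ`: diagonalizing `ρ = W diag(λ) Wᴴ` writes `Tr(A ρ)` as
the convex combination `∑ λᵢ (Wᴴ A W)ᵢᵢ`, and each diagonal entry is bounded by
`‖Wᴴ A W‖ = ‖A‖`.
-/

open Matrix
open scoped Matrix.Norms.L2Operator ComplexOrder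

/-- The depolarizing channel with depolarization rate `p` on `D × D` complex matrices:
`𝓔_p(X) = (1 − p)·X + p·(Tr(X)/D)·I`. -/
noncomputable def depolarize (D : ℕ) (p : ℝ) (X : Matrix (Fin D) (Fin D) ℂ) :
    Matrix (Fin D) (Fin D) ℂ :=
  (1 - (p : ℂ)) • X + (p : ℂ) • ((X.trace / (D : ℂ)) • (1 : Matrix (Fin D) (Fin D) ℂ))

namespace Matrix

variable {𝕜 m n : Type*} [RCLike 𝕜] [Fintype m] [Fintype n]

lemma norm_apply_le_l2_opNorm [DecidableEq n] (M : Matrix m n 𝕜) (i : m) (j : n) :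
    ‖M i j‖ ≤ ‖M‖ :=
  calc ‖M i j‖ = ‖(EuclideanSpace.equiv m 𝕜).symm (M *ᵥ EuclideanSpace.single j 1) i‖ := by
        simp
    _ ≤ ‖(EuclideanSpace.equiv m 𝕜).symm (M *ᵥ EuclideanSpace.single j 1)‖ :=
        PiLp.norm_apply_le _ _
    _ ≤ ‖M‖ * ‖EuclideanSpace.single j (1 : 𝕜)‖ := M.l2_opNorm_mulVec _
    _ = ‖M‖ := by simp

lemma trace_mul_diagonal [DecidableEq n] (A : Matrix n n 𝕜) (d : n → 𝕜) :
    (A * diagonal d).trace = ∑ i, A i i * d i := by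
  simp [trace]

lemma PosSemidef.norm_trace_mul_le [DecidableEq n] {ρ : Matrix n n 𝕜} (hρ : ρ.PosSemidef)
    (A : Matrix n n 𝕜) : ‖(A * ρ).trace‖ ≤ ‖A‖ * RCLike.re ρ.trace := by
  set W : unitary (Matrix n n 𝕜) := hρ.isHermitian.eigenvectorUnitary
  set ev := hρ.isHermitian.eigenvalues
  have hρW : ρ = (W : Matrix n n 𝕜) * diagonal (RCLike.ofReal ∘ ev) * star (W : Matrix n n 𝕜) :=
    hρ.isHermitian.spectral_theorem
  have htrace : (A * ρ).trace = ∑ i, (star (W : Matrix n n 𝕜) * A * W) i i * ev i := by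
    rw [hρW, ← Matrix.mul_assoc, ← Matrix.mul_assoc, trace_mul_cycle, Matrix.mul_assoc _ A,
      trace_mul_diagonal]
    rfl
  have hconj : ‖star (W : Matrix n n 𝕜) * A * W‖ = ‖A‖ := by
    rw [CStarRing.norm_mul_coe_unitary, ← Unitary.coe_star, CStarRing.norm_coe_unitary_mul]
  have htr : RCLike.re ρ.trace = ∑ i, ev i := by
    simp [hρ.isHermitian.trace_eq_sum_eigenvalues, ev]
  calc ‖(A * ρ).trace‖ ≤ ∑ i, ‖(star (W : Matrix n n 𝕜) * A * W) i i‖ * ev i := by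
        rw [htrace]
        refine (norm_sum_le _ _).trans_eq (Finset.sum_congr rfl fun i _ => ?_)
        rw [norm_mul, RCLike.norm_ofReal, abs_of_nonneg (hρ.eigenvalues_nonneg i)]
    _ ≤ ∑ i, ‖A‖ * ev i := by
        gcongr with i
        · exact hρ.eigenvalues_nonneg i
        · exact hconj ▸ norm_apply_le_l2_opNorm _ i i
    _ = ‖A‖ * RCLike.re ρ.trace := by rw [htr, Finset.mul_sum]

lemma trace_mul_conj {R : Type*} [CommRing R] [StarRing R] (O U ρ : Matrix n n R) :
    (O * (U * ρ * Uᴴ)).trace = (Uᴴ * O * U * ρ).trace := by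
  rw [← Matrix.mul_assoc, ← Matrix.mul_assoc, trace_mul_comm]
  simp only [Matrix.mul_assoc]

lemma trace_conj_of_conjTranspose_mul_self {R : Type*} [CommRing R] [StarRing R] [DecidableEq n]
    {U : Matrix n n R} (hU : Uᴴ * U = 1) (ρ : Matrix n n R) : (U * ρ * Uᴴ).trace = ρ.trace := by
  rw [trace_mul_cycle, hU, Matrix.one_mul]

end Matrix

section Depolarize

variable {D : ℕ} {p : ℝ}

lemma depolarize_sub (X Y : Matrix (Fin D) (Fin D) ℂ) :
    depolarize D p X - depolarize D p Y = depolarize D p (X - Y) := by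
  simp only [depolarize, trace_sub, sub_div, sub_smul, smul_sub]
  abel

lemma depolarize_of_trace_eq_zero {X : Matrix (Fin D) (Fin D) ℂ} (hX : X.trace = 0) :
    depolarize D p X = (1 - (p : ℂ)) • X := by
  simp [depolarize, hX]

lemma iterate_depolarize_of_trace_eq_zero {X : Matrix (Fin D) (Fin D) ℂ} (hX : X.trace = 0)
    (N : ℕ) : (depolarize D p)^[N] X = (1 - (p : ℂ)) ^ N • X := by
  induction N with
  | zero => simp
  | succ N ih =>
    rw [Function.iterate_succ_apply', ih, depolarize_of_trace_eq_zero (by simp [hX]), smul_smul,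
      pow_succ']

lemma iterate_depolarize_sub (X Y : Matrix (Fin D) (Fin D) ℂ) (N : ℕ) :
    (depolarize D p)^[N] X - (depolarize D p)^[N] Y = (depolarize D p)^[N] (X - Y) := by
  induction N with
  | zero => rfl
  | succ N ih => simp only [Function.iterate_succ_apply', depolarize_sub, ih]

lemma iterate_depolarize_sub_of_trace_eq {X Y : Matrix (Fin D) (Fin D) ℂ}
    (h : X.trace = Y.trace) (N : ℕ) :
    (depolarize D p)^[N] X - (depolarize D p)^[N] Y = (1 - (p : ℂ)) ^ N • (X - Y) := by
  rw [iterate_depolarize_sub, iterate_depolarize_of_trace_eq_zero (by rw [trace_sub, h, sub_self])]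

end Depolarize

theorem noisy_output_contraction_general (D : ℕ) (p : ℝ) (hp : p ∈ Set.Icc (0 : ℝ) 1)
    (N : ℕ) (ρ O U V : Matrix (Fin D) (Fin D) ℂ)
    (hρpos : ρ.PosSemidef) (hρtr : ρ.trace = 1)
    (hU : Uᴴ * U = 1) (hV : Vᴴ * V = 1) :
    ‖(O * (depolarize D p)^[N] (U * ρ * Uᴴ)).trace -
        (O * (depolarize D p)^[N] (V * ρ * Vᴴ)).trace‖ ≤
      (1 - p) ^ N * ‖Uᴴ * O * U - Vᴴ * O * V‖ := by
  have hdiff := iterate_depolarize_sub_of_trace_eq (p := p) (N := N)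
    (X := U * ρ * Uᴴ) (Y := V * ρ * Vᴴ)
    (by rw [trace_conj_of_conjTranspose_mul_self hU, trace_conj_of_conjTranspose_mul_self hV])
  have hout : (O * (depolarize D p)^[N] (U * ρ * Uᴴ)).trace -
      (O * (depolarize D p)^[N] (V * ρ * Vᴴ)).trace =
      (1 - (p : ℂ)) ^ N * ((Uᴴ * O * U - Vᴴ * O * V) * ρ).trace := by
    rw [← trace_sub, ← Matrix.mul_sub, hdiff, Matrix.mul_smul, trace_smul, Matrix.mul_sub,
      trace_sub, trace_mul_conj, trace_mul_conj, ← trace_sub, ← Matrix.sub_mul, smul_eq_mul]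
  have h1p : 0 ≤ 1 - p := sub_nonneg.2 hp.2
  have hcontraction : ‖(1 - (p : ℂ))‖ = 1 - p := by
    rw [← Complex.ofReal_one, ← Complex.ofReal_sub, Complex.norm_real, Real.norm_of_nonneg h1p]
  calc _ = (1 - p) ^ N * ‖((Uᴴ * O * U - Vᴴ * O * V) * ρ).trace‖ := by
        rw [hout, norm_mul, norm_pow, hcontraction]
    _ ≤ (1 - p) ^ N * ‖Uᴴ * O * U - Vᴴ * O * V‖ := by
        gcongr
        simpa [hρtr] using hρpos.norm_trace_mul_le (Uᴴ * O * U - Vᴴ * O * V)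

/-- Key Lipschitz estimate for Theorem 3: under `N` layers of depolarizing noise, the distance
between noisy circuit outputs is contracted by `(1 − p)^N` relative to the operator-norm
distance between the conjugated observables. -/
theorem noisy_output_contraction (D : ℕ) (hD : 1 ≤ D) (p : ℝ) (hp : p ∈ Set.Icc (0 : ℝ) 1)
    (N : ℕ) (ρ O U V : Matrix (Fin D) (Fin D) ℂ)
    (hρherm : ρ.IsHermitian) (hρpos : ρ.PosSemidef) (hρtr : ρ.trace = 1)
    (hU : Uᴴ * U = 1) (hV : Vᴴ * V = 1) :
    ‖(O * (depolarize D p)^[N] (U * ρ * Uᴴ)).trace -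
        (O * (depolarize D p)^[N] (V * ρ * Vᴴ)).trace‖ ≤
      (1 - p) ^ N * ‖Uᴴ * O * U - Vᴴ * O * V‖ :=
  noisy_output_contraction_general D p hp N ρ O U V hρpos hρtr hU hV
end

section
/- (Composite noisy-score Lipschitz bound underlying Theorem 3.) Let D ≥ 1, p ∈ [0, 1], N a natural number, ρ a D×D complex density matrix, O a D×D Hermitian matrix, c ∈ ℝ, R ∈ ℝ, and U, V D×D unitary matrices. Let 𝓔_p^{∘N} be the N-fold composition of the depolarizing channel 𝓔_p(X) = (1 − p)X + p(Tr(X)/D)·I, and define the noisy PEQAD score h_p(U) = (Re(Tr(O·𝓔_p^{∘N}(UρUᴴ))) − c)² − R². Then |h_p(U) − h_p(V)| ≤ (1 − p)^N·(2‖O‖ + 2|c|)·‖UᴴOU − VᴴOV‖, where ‖·‖ denotes the ℓ²→ℓ² operator norm. Hence under a local depolarizing noise channel affecting N gates, the Lipschitz constant of the PEQAD hypothesis map is reduced by the factor (1 − p)^N. -/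
/-!
The channel `𝓔_p` preserves traces and positive semidefiniteness, and it contracts the
traceless part of its argument by `1 - p`; hence
`𝓔_p^{∘N}(X) = (1 - p)^N X + (1 - (1 - p)^N) (Tr X / D) I`, and `𝓔_p^{∘N}` maps density matrices
to density matrices. The noisy expectations `a = Re Tr(O 𝓔_p^{∘N}(UρUᴴ))` and `b` (same with `V`)
are therefore bounded by `‖O‖`, while in `a - b` the maximally mixed parts cancel, leaving
`(1 - p)^N Re Tr((UᴴOU - VᴴOV) ρ)`. Both bounds come from `|Re Tr(A M)| ≤ ‖A‖` for a density
matrix `M`, and the theorem follows from `(a - c)² - (b - c)² = (a - b)(a + b - 2c)`.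
-/

open Matrix
open scoped Matrix.Norms.L2Operator ComplexOrder

namespace Matrix

section Trace

variable {R n : Type*} [Fintype n] [CommSemiring R] [StarRing R]

lemma trace_mul_mul_mul_conjTranspose (A W M : Matrix n n R) :
    (A * (W * M * Wᴴ)).trace = (Wᴴ * A * W * M).trace := by
  rw [← Matrix.mul_assoc, ← Matrix.mul_assoc, trace_mul_comm, ← Matrix.mul_assoc,
    ← Matrix.mul_assoc]

lemma trace_mul_mul_conjTranspose [DecidableEq n] {W : Matrix n n R} (hW : Wᴴ * W = 1) (M : Matrix n n R) :
    (W * M * Wᴴ).trace = M.trace := by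
  rw [trace_mul_cycle, hW, Matrix.one_mul]

end Trace

variable {𝕜 n : Type*} [RCLike 𝕜] [Fintype n] [DecidableEq n]

lemma norm_star_dotProduct_mulVec_le (A : Matrix n n 𝕜) (x : n → 𝕜) :
    ‖star x ⬝ᵥ A *ᵥ x‖ ≤ ‖A‖ * RCLike.re (star x ⬝ᵥ x) := by
  have hinner : star x ⬝ᵥ A *ᵥ x = inner 𝕜 (WithLp.toLp 2 x) (WithLp.toLp 2 (A *ᵥ x)) := by
    rw [EuclideanSpace.inner_eq_star_dotProduct, dotProduct_comm]
  have hnorm : ‖WithLp.toLp 2 x‖ ^ 2 = RCLike.re (star x ⬝ᵥ x) := by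
    rw [← inner_self_eq_norm_sq (𝕜 := 𝕜), EuclideanSpace.inner_eq_star_dotProduct,
      dotProduct_comm]
  calc ‖star x ⬝ᵥ A *ᵥ x‖ ≤ ‖WithLp.toLp 2 x‖ * ‖WithLp.toLp 2 (A *ᵥ x)‖ := by
        rw [hinner]; exact norm_inner_le_norm _ _
    _ ≤ ‖WithLp.toLp 2 x‖ * (‖A‖ * ‖WithLp.toLp 2 x‖) := by
        gcongr; exact A.l2_opNorm_mulVec (WithLp.toLp 2 x)
    _ = ‖A‖ * RCLike.re (star x ⬝ᵥ x) := by rw [← hnorm]; ring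

/- Writing `M = Bᴴ B`, `Tr(A M) = Tr(B A Bᴴ)` is the sum of the quadratic forms of `A` at the
columns of `Bᴴ`, and `Tr M` is the sum of their squared norms. -/
open scoped MatrixOrder in
lemma PosSemidef.norm_trace_mul_le_s16 (A : Matrix n n 𝕜) {M : Matrix n n 𝕜} (hM : M.PosSemidef) :
    ‖(A * M).trace‖ ≤ ‖A‖ * RCLike.re M.trace := by
  obtain ⟨B, rfl⟩ := CStarAlgebra.nonneg_iff_eq_star_mul_self.mp hM.nonneg
  have htrace : ∀ C : Matrix n n 𝕜,
      (C * (star B * B)).trace = ∑ i, star (star (B i)) ⬝ᵥ C *ᵥ star (B i) := fun C => by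
    rw [← Matrix.mul_assoc, trace_mul_cycle, star_eq_conjTranspose]
    exact Finset.sum_congr rfl fun i _ => (mul_mul_apply _ _ _ i i).trans (by rw [star_star]; rfl)
  calc ‖(A * (star B * B)).trace‖ ≤ ∑ i, ‖star (star (B i)) ⬝ᵥ A *ᵥ star (B i)‖ := by
        rw [htrace]; exact norm_sum_le _ _
    _ ≤ ∑ i, ‖A‖ * RCLike.re (star (star (B i)) ⬝ᵥ star (B i)) :=
        Finset.sum_le_sum fun i _ => norm_star_dotProduct_mulVec_le A _
    _ = ‖A‖ * RCLike.re (star B * B).trace := by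
        rw [← Matrix.one_mul (star B * B), htrace, ← Finset.mul_sum, map_sum]
        simp only [one_mulVec]

lemma PosSemidef.abs_re_trace_mul_le (A : Matrix n n 𝕜) {M : Matrix n n 𝕜} (hM : M.PosSemidef)
    (htr : M.trace = 1) : |RCLike.re (A * M).trace| ≤ ‖A‖ := by
  simpa [htr] using (RCLike.abs_re_le_norm _).trans (hM.norm_trace_mul_le_s16 A)

end Matrix

lemma abs_sub_sq_sub_sub_sq_le {a b c K : ℝ} (ha : |a| ≤ K) (hb : |b| ≤ K) :
    |(a - c) ^ 2 - (b - c) ^ 2| ≤ (2 * K + 2 * |c|) * |a - b| := by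
  have hsum : |a + b - 2 * c| ≤ 2 * K + 2 * |c| := by
    calc |a + b - 2 * c| ≤ |a| + |b| + |2 * c| :=
          (abs_sub _ _).trans (by gcongr; exact abs_add_le _ _)
      _ ≤ 2 * K + 2 * |c| := by rw [abs_mul, abs_two]; linarith
  rw [show (a - c) ^ 2 - (b - c) ^ 2 = (a + b - 2 * c) * (a - b) by ring, abs_mul]
  gcongr

section Depolarize

variable {D : ℕ} {p : ℝ}

@[simp]
lemma trace_depolarize (X : Matrix (Fin D) (Fin D) ℂ) : (depolarize D p X).trace = X.trace := by
  rcases Nat.eq_zero_or_pos D with rfl | hD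
  · simp [Matrix.trace]
  · have : (D : ℂ) ≠ 0 := by exact_mod_cast hD.ne'
    simp only [depolarize, trace_add, trace_smul, trace_one, Fintype.card_fin, smul_eq_mul]
    field_simp
    ring

@[simp]
lemma trace_iterate_depolarize (N : ℕ) (X : Matrix (Fin D) (Fin D) ℂ) :
    ((depolarize D p)^[N] X).trace = X.trace := by
  induction N with
  | zero => rfl
  | succ n ih => rw [Function.iterate_succ_apply', trace_depolarize, ih]

lemma iterate_depolarize (N : ℕ) (X : Matrix (Fin D) (Fin D) ℂ) :
    (depolarize D p)^[N] X = (1 - (p : ℂ)) ^ N • X +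
      (1 - (1 - (p : ℂ)) ^ N) • ((X.trace / (D : ℂ)) • (1 : Matrix (Fin D) (Fin D) ℂ)) := by
  induction N with
  | zero => simp
  | succ n ih =>
    rw [Function.iterate_succ_apply', depolarize, trace_iterate_depolarize, ih]
    match_scalars <;> ring

lemma iterate_depolarize_sub_iterate_depolarize (N : ℕ) {X Y : Matrix (Fin D) (Fin D) ℂ}
    (h : X.trace = Y.trace) :
    (depolarize D p)^[N] X - (depolarize D p)^[N] Y = (1 - (p : ℂ)) ^ N • (X - Y) := by
  rw [iterate_depolarize, iterate_depolarize, h, smul_sub]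
  abel

lemma posSemidef_depolarize (hp : p ∈ Set.Icc (0 : ℝ) 1) {X : Matrix (Fin D) (Fin D) ℂ}
    (hX : X.PosSemidef) : (depolarize D p X).PosSemidef := by
  have hscalar : (0 : ℂ) ≤ X.trace / (D : ℂ) := div_nonneg hX.trace_nonneg (Nat.cast_nonneg D)
  exact (hX.smul (sub_nonneg.mpr (by exact_mod_cast hp.2))).add
    ((PosSemidef.one.smul hscalar).smul (by exact_mod_cast hp.1))

lemma posSemidef_iterate_depolarize (hp : p ∈ Set.Icc (0 : ℝ) 1) (N : ℕ)
    {X : Matrix (Fin D) (Fin D) ℂ} (hX : X.PosSemidef) : ((depolarize D p)^[N] X).PosSemidef :=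
  Function.Iterate.rec PosSemidef hX (fun _ => posSemidef_depolarize hp) N

lemma re_trace_mul_iterate_depolarize_sub (N : ℕ) (ρ O : Matrix (Fin D) (Fin D) ℂ)
    {U V : Matrix (Fin D) (Fin D) ℂ} (hU : Uᴴ * U = 1) (hV : Vᴴ * V = 1) :
    (O * (depolarize D p)^[N] (U * ρ * Uᴴ)).trace.re -
        (O * (depolarize D p)^[N] (V * ρ * Vᴴ)).trace.re =
      (1 - p) ^ N * ((Uᴴ * O * U - Vᴴ * O * V) * ρ).trace.re := by
  have htr : (U * ρ * Uᴴ).trace = (V * ρ * Vᴴ).trace := by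
    rw [trace_mul_mul_conjTranspose hU, trace_mul_mul_conjTranspose hV]
  rw [← Complex.sub_re, ← trace_sub, ← Matrix.mul_sub,
    iterate_depolarize_sub_iterate_depolarize N htr, Matrix.mul_smul, trace_smul, Matrix.mul_sub,
    trace_sub, trace_mul_mul_mul_conjTranspose, trace_mul_mul_mul_conjTranspose, ← trace_sub,
    ← Matrix.sub_mul, smul_eq_mul]
  norm_cast
  exact Complex.re_ofReal_mul _ _

end Depolarize

theorem noisy_peqad_score_lipschitz_general (D : ℕ) (p : ℝ)
    (hp : p ∈ Set.Icc (0 : ℝ) 1) (N : ℕ) (ρ O U V : Matrix (Fin D) (Fin D) ℂ)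
    (c R : ℝ)
    (hρpos : ρ.PosSemidef) (hρtr : ρ.trace = 1)
    (hU : Uᴴ * U = 1) (hV : Vᴴ * V = 1) :
    |((((O * (depolarize D p)^[N] (U * ρ * Uᴴ)).trace).re - c) ^ 2 - R ^ 2) -
        ((((O * (depolarize D p)^[N] (V * ρ * Vᴴ)).trace).re - c) ^ 2 - R ^ 2)| ≤
      (1 - p) ^ N * (2 * ‖O‖ + 2 * |c|) * ‖Uᴴ * O * U - Vᴴ * O * V‖ := by
  have hscore : ∀ W : Matrix (Fin D) (Fin D) ℂ, Wᴴ * W = 1 →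
      |(O * (depolarize D p)^[N] (W * ρ * Wᴴ)).trace.re| ≤ ‖O‖ := fun W hW =>
    (posSemidef_iterate_depolarize hp N (hρpos.mul_mul_conjTranspose_same W)).abs_re_trace_mul_le
      O (by rw [trace_iterate_depolarize, trace_mul_mul_conjTranspose hW, hρtr])
  have hcontract : |(O * (depolarize D p)^[N] (U * ρ * Uᴴ)).trace.re -
      (O * (depolarize D p)^[N] (V * ρ * Vᴴ)).trace.re| ≤
      (1 - p) ^ N * ‖Uᴴ * O * U - Vᴴ * O * V‖ := by
    have hq : 0 ≤ (1 - p) ^ N := pow_nonneg (sub_nonneg.mpr hp.2) N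
    rw [re_trace_mul_iterate_depolarize_sub N ρ O hU hV, abs_mul, abs_of_nonneg hq]
    exact mul_le_mul_of_nonneg_left (hρpos.abs_re_trace_mul_le _ hρtr) hq
  rw [sub_sub_sub_cancel_right]
  calc _ ≤ (2 * ‖O‖ + 2 * |c|) * |(O * (depolarize D p)^[N] (U * ρ * Uᴴ)).trace.re -
        (O * (depolarize D p)^[N] (V * ρ * Vᴴ)).trace.re| :=
        abs_sub_sq_sub_sub_sq_le (hscore U hU) (hscore V hV)
    _ ≤ (2 * ‖O‖ + 2 * |c|) * ((1 - p) ^ N * ‖Uᴴ * O * U - Vᴴ * O * V‖) := by gcongr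
    _ = (1 - p) ^ N * (2 * ‖O‖ + 2 * |c|) * ‖Uᴴ * O * U - Vᴴ * O * V‖ := by ring

/-- Composite noisy-score Lipschitz bound underlying Theorem 3: the noisy PEQAD score
`h_p(U) = (Re Tr(O · 𝓔_p^{∘N}(UρUᴴ)) − c)² − R²` satisfies
`|h_p(U) − h_p(V)| ≤ (1 − p)^N (2‖O‖ + 2|c|) ‖Uᴴ O U − Vᴴ O V‖`. -/
theorem noisy_peqad_score_lipschitz (D : ℕ) (hD : 1 ≤ D) (p : ℝ)
    (hp : p ∈ Set.Icc (0 : ℝ) 1) (N : ℕ) (ρ O U V : Matrix (Fin D) (Fin D) ℂ)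
    (c R : ℝ)
    (hρherm : ρ.IsHermitian) (hρpos : ρ.PosSemidef) (hρtr : ρ.trace = 1)
    (hO : O.IsHermitian) (hU : Uᴴ * U = 1) (hV : Vᴴ * V = 1) :
    |((((O * (depolarize D p)^[N] (U * ρ * Uᴴ)).trace).re - c) ^ 2 - R ^ 2) -
        ((((O * (depolarize D p)^[N] (V * ρ * Vᴴ)).trace).re - c) ^ 2 - R ^ 2)| ≤
      (1 - p) ^ N * (2 * ‖O‖ + 2 * |c|) * ‖Uᴴ * O * U - Vᴴ * O * V‖ :=
  noisy_peqad_score_lipschitz_general D p hp N ρ O U V c R hρpos hρtr hU hV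
end
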